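/- arXiv:2407.20865 — 2 statements merged into one kernel-verified Lean document; each statement's English description precedes it below -/
import Mathlib

section
/- For any matrix ρ on ℂ^d and any b ∈ [d]: tr(S_t Q_b ρ^{⊗t}) = ⟨b| ρ^t |b⟩, where Q_b = t^{−1} Σ_{i=1}^t |b⟩⟨b|_i ⊗ I^{⊗(t−1)} and S_t is the cyclic-shift unitary on (ℂ^d)^{⊗t}. -/
/-- One-step cyclic shift on strings in `[d]^t`: `(τ x) i = x (i+1)`. -/
def tau (d t : ℕ) [NeZero t] (x : Fin t → Fin d) : Fin t → Fin d :=
  fun i => x (i + 1)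

/-- The cyclic-shift unitary `S_t` on `(ℂ^d)^{⊗t}`, as a matrix: `S_t |x⟩ = |τ x⟩`. -/
def shiftMat (d t : ℕ) [NeZero t] : Matrix (Fin t → Fin d) (Fin t → Fin d) ℂ :=
  Matrix.of fun y x => if y = tau d t x then 1 else 0

/-- The projector `|b⟩⟨b|_i ⊗ I^{⊗(t−1)}` onto basis state `b` at tensor factor `i`. -/
def projMat (d t : ℕ) (i : Fin t) (b : Fin d) :
    Matrix (Fin t → Fin d) (Fin t → Fin d) ℂ :=
  Matrix.of fun y x => if y = x ∧ x i = b then 1 else 0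

/-- `Q_b = t⁻¹ Σ_i |b⟩⟨b|_i ⊗ I^{⊗(t−1)}`. -/
noncomputable def QMat (d t : ℕ) (b : Fin d) :
    Matrix (Fin t → Fin d) (Fin t → Fin d) ℂ :=
  ((t : ℂ))⁻¹ • ∑ i : Fin t, projMat d t i b

/-- The `t`-fold tensor (Kronecker) power of a `d × d` matrix. -/
def tpow (d t : ℕ) (ρ : Matrix (Fin d) (Fin d) ℂ) :
    Matrix (Fin t → Fin d) (Fin t → Fin d) ℂ :=
  Matrix.of fun y x => ∏ i : Fin t, ρ (y i) (x i)

/-- Product of `ρ`-entries along the cyclic path `z 0 → z 1 → ⋯ → z (t-1) → z 0`. -/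
def cyc {d : ℕ} (t : ℕ) [NeZero t] (ρ : Matrix (Fin d) (Fin d) ℂ)
    (z : Fin t → Fin d) : ℂ :=
  ∏ j : Fin t, ρ (z j) (z (j + 1))

lemma cyc_shift {d t : ℕ} [NeZero t] (ρ : Matrix (Fin d) (Fin d) ℂ)
    (z : Fin t → Fin d) (k : Fin t) :
    cyc t ρ (fun j => z (j + k)) = cyc t ρ z := by
  unfold cyc
  exact Fintype.prod_equiv (Equiv.addRight k)
    (fun j => ρ (z (j + k)) (z (j + 1 + k)))
    (fun j => ρ (z j) (z (j + 1)))
    (fun j => by simp only [Equiv.coe_addRight]; rw [add_right_comm])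

lemma fin_castSucc_add_one {n : ℕ} (j : Fin n) : j.castSucc + 1 = j.succ := by
  have h := j.isLt
  ext
  simp [Fin.add_def, Fin.val_one', Nat.mod_eq_of_lt (show 1 < n+1 by omega),
    Nat.mod_eq_of_lt (show j.val+1 < n+1 by omega)]

lemma chain_sum {d : ℕ} (ρ : Matrix (Fin d) (Fin d) ℂ) (n : ℕ) (a c : Fin d) :
    ∑ w : Fin n → Fin d,
      (∏ j : Fin n, ρ ((Fin.cons a w : Fin (n+1) → Fin d) j.castSucc) (w j)) * ρ ((Fin.cons a w : Fin (n+1) → Fin d) (Fin.last n)) c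
      = (ρ ^ (n+1)) a c := by
  induction n generalizing a with
  | zero =>
      simp [pow_one]
  | succ n ih =>
      rw [pow_succ', Matrix.mul_apply]
      rw [← Equiv.sum_comp (Fin.consEquiv (fun _ : Fin (n+1) => Fin d))]
      rw [Fintype.sum_prod_type]
      refine Finset.sum_congr rfl (fun x _ => ?_)
      rw [← ih x, Finset.mul_sum]
      refine Finset.sum_congr rfl (fun v _ => ?_)
      simp only [Fin.consEquiv_apply]
      rw [Fin.prod_univ_succ]
      simp only [Fin.cons_zero, Fin.cons_succ, Fin.castSucc_zero]
      have h1 : ∀ k : Fin n, (k.succ).castSucc = (k.castSucc).succ := fun k => rfl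
      have h2 : (Fin.last (n+1)) = (Fin.last n).succ := (Fin.succ_last n).symm
      simp only [h1, h2, Fin.cons_succ]
      have he : ((Fin.consEquiv fun _ : Fin (n+1) => Fin d) (x, v)) = (Fin.cons x v : Fin (n+1) → Fin d) := rfl
      rw [he]
      ring

lemma sum_start {d n : ℕ} (ρ : Matrix (Fin d) (Fin d) ℂ) (b : Fin d) :
    ∑ z : Fin (n+1) → Fin d, (if z 0 = b then cyc (n+1) ρ z else 0)
      = (ρ ^ (n+1)) b b := by
  rw [← Equiv.sum_comp (Fin.consEquiv (fun _ : Fin (n+1) => Fin d)), Fintype.sum_prod_type]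
  have he : ∀ (x : Fin d) (w : Fin n → Fin d),
      ((Fin.consEquiv fun _ : Fin (n+1) => Fin d) (x, w)) = (Fin.cons x w : Fin (n+1) → Fin d) :=
    fun _ _ => rfl
  simp only [he, Fin.cons_zero]
  rw [Finset.sum_comm]
  simp only [Finset.sum_ite_eq' Finset.univ b, Finset.mem_univ, if_true]
  rw [← chain_sum ρ n b b]
  refine Finset.sum_congr rfl (fun w _ => ?_)
  unfold cyc
  rw [Fin.prod_univ_castSucc]
  simp only [fin_castSucc_add_one, Fin.cons_succ, Fin.last_add_one, Fin.cons_zero]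

lemma sum_any {d t : ℕ} [NeZero t] (ρ : Matrix (Fin d) (Fin d) ℂ) (b : Fin d) (i : Fin t) :
    ∑ z : Fin t → Fin d, (if z i = b then cyc t ρ z else 0)
      = ∑ z : Fin t → Fin d, (if z 0 = b then cyc t ρ z else 0) := by
  refine Fintype.sum_equiv (Equiv.arrowCongr (Equiv.addRight i).symm (Equiv.refl (Fin d)))
    _ _ (fun z => ?_)
  have h1 : ∀ j : Fin t,
      (Equiv.arrowCongr (Equiv.addRight i).symm (Equiv.refl (Fin d))) z j = z (j + i) :=
    fun j => rfl
  simp only [h1, zero_add]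
  congr 1
  exact (cyc_shift ρ z i).symm

/-- `tr(S_t Q_b ρ^{⊗t}) = ⟨b| ρ^t |b⟩` for any matrix `ρ` and `b ∈ [d]`. -/
theorem trace_shift_QMat_tpow (d t : ℕ) [NeZero d] [NeZero t]
    (ρ : Matrix (Fin d) (Fin d) ℂ) (b : Fin d) :
    (shiftMat d t * QMat d t b * tpow d t ρ).trace = (ρ ^ t) b b := by
  obtain ⟨n, rfl⟩ : ∃ n, t = n + 1 := ⟨t - 1, by have := NeZero.ne t; omega⟩
  have key : ∀ i : Fin (n+1),
      (shiftMat d (n+1) * projMat d (n+1) i b * tpow d (n+1) ρ).trace = (ρ ^ (n+1)) b b := by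
    intro i
    have entry : ∀ x y, (shiftMat d (n+1) * projMat d (n+1) i b) x y
        = if x = tau d (n+1) y ∧ y i = b then 1 else 0 := by
      intro x y
      rw [Matrix.mul_apply, Finset.sum_eq_single y]
      · by_cases h1 : y i = b <;> by_cases h2 : x = tau d (n+1) y <;>
          simp [shiftMat, projMat, h1, h2]
      · intro w _ hw
        simp [projMat, hw]
      · simp
    simp only [Matrix.trace, Matrix.diag, Matrix.mul_apply, entry]
    rw [Finset.sum_comm]
    have hcol : ∀ y : Fin (n+1) → Fin d,
        (∑ x, (if x = tau d (n+1) y ∧ y i = b then 1 else 0) * tpow d (n+1) ρ y x)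
          = if y i = b then cyc (n+1) ρ y else 0 := by
      intro y
      simp only [ite_and, ite_mul, one_mul, zero_mul]
      rw [Finset.sum_ite_eq' Finset.univ (tau d (n+1) y)]
      simp only [Finset.mem_univ, if_true]
      rcases eq_or_ne (y i) b with h | h
      · simp [h, tpow, tau, cyc]
      · simp [h]
    simp only [hcol]
    rw [sum_any, sum_start]
  unfold QMat
  rw [Matrix.mul_smul, Matrix.smul_mul, Matrix.trace_smul, Matrix.mul_sum, Matrix.sum_mul,
    Matrix.trace_sum]
  rw [Finset.sum_congr rfl (fun i _ => key i)]
  rw [Finset.sum_const, Finset.card_univ, Fintype.card_fin]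
  rw [smul_eq_mul, nsmul_eq_mul]
  have hne : ((n : ℂ) + 1) ≠ 0 := Nat.cast_add_one_ne_zero n
  push_cast
  field_simp
end

section
/- (Variance reduction bound, abstract form.) In the setting of the replica shadow estimator, let O and A be Hermitian operators on H, and suppose Pr(x|V) = ⟨ψ_x|(VρV†)^{⊗t}|ψ_x⟩ and Pr(b|x) = ⟨ψ_x|Q_b|ψ_x⟩ where {|ψ_x⟩} is an orthonormal basis of H^{⊗t} of simultaneous eigenvectors of S_t and all Q_b, the eigenvalues f(x) of S_t satisfy |f(x)| ≤ 1, and ρ is a density matrix. Then E[(tr(O Â))²] ≤ E_{V∼𝓔} Σ_b ⟨b|V 𝓜^{−1}(O) V†|b⟩² ⟨b|VρV†|b⟩, i.e., the second moment of the replica estimator ô_t = Re(f(x))·⟨b|V𝓜^{−1}(O)V†|b⟩ is at most the second moment of the linear single-copy shadow estimator tr(O ρ̂). -/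
open scoped Matrix ComplexOrder

/-- Sum of diagonal inner products over an orthonormal basis equals the matrix trace. -/
lemma onb_trace {n X : Type*} [Fintype n] [DecidableEq n] [Fintype X]
    (ψ : OrthonormalBasis X ℂ (EuclideanSpace ℂ n)) (A : Matrix n n ℂ) :
    ∑ x, (inner ℂ (ψ x) (Matrix.toEuclideanLin A (ψ x)) : ℂ) = A.trace := by
  have key : ∀ x, (inner ℂ (ψ x) (Matrix.toEuclideanLin A (ψ x)) : ℂ)
      = ∑ y, ∑ z, A y z * ((inner ℂ (EuclideanSpace.single z (1:ℂ)) (ψ x) : ℂ)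
          * (inner ℂ (ψ x) (EuclideanSpace.single y (1:ℂ)) : ℂ)) := by
    intro x
    simp only [EuclideanSpace.inner_single_left, EuclideanSpace.inner_single_right,
      map_one, one_mul, mul_one]
    simp only [Matrix.toEuclideanLin_apply, PiLp.inner_apply, RCLike.inner_apply,
      Matrix.mulVec, dotProduct, Finset.sum_mul,
      Finset.mul_sum]
    refine Finset.sum_congr rfl fun y _ => Finset.sum_congr rfl fun z _ => ?_
    ring
  simp_rw [key]
  rw [Finset.sum_comm]
  have h2 : ∀ y, ∑ x, ∑ z, A y z * ((inner ℂ (EuclideanSpace.single z (1:ℂ)) (ψ x) : ℂ)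
          * (inner ℂ (ψ x) (EuclideanSpace.single y (1:ℂ)) : ℂ)) = A y y := by
    intro y
    rw [Finset.sum_comm]
    simp_rw [← Finset.mul_sum, ψ.sum_inner_mul_inner]
    simp [EuclideanSpace.inner_single_left, EuclideanSpace.single_apply]
  simp_rw [h2]
  simp [Matrix.trace, Matrix.diag]

lemma tpow_mul (d t : ℕ) (A B : Matrix (Fin d) (Fin d) ℂ) :
    tpow d t (A * B) = tpow d t A * tpow d t B := by
  ext y x
  simp only [tpow, Matrix.mul_apply, Matrix.of_apply]
  rw [Finset.prod_univ_sum]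
  rw [Fintype.piFinset_univ]
  exact Finset.sum_congr rfl fun g _ => Finset.prod_mul_distrib

lemma tpow_conjT (d t : ℕ) (A : Matrix (Fin d) (Fin d) ℂ) :
    (tpow d t A)ᴴ = tpow d t Aᴴ := by
  ext y x
  simp [tpow, Matrix.conjTranspose_apply, star_prod]

open scoped Matrix.Norms.L2Operator MatrixOrder in
lemma tpow_psd (d t : ℕ) {σ : Matrix (Fin d) (Fin d) ℂ} (hσ : σ.PosSemidef) :
    (tpow d t σ).PosSemidef := by
  obtain ⟨B, rfl⟩ := CStarAlgebra.nonneg_iff_eq_star_mul_self.mp hσ.nonneg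
  rw [Matrix.star_eq_conjTranspose, tpow_mul, ← tpow_conjT]
  exact Matrix.posSemidef_conjTranspose_mul_self _

lemma psd_inner_nonneg {n : Type*} [Fintype n] [DecidableEq n] {M : Matrix n n ℂ}
    (hM : M.PosSemidef) (v : EuclideanSpace ℂ n) :
    0 ≤ (inner ℂ v (Matrix.toEuclideanLin M v) : ℂ).re := by
  have h := hM.dotProduct_mulVec_nonneg ((WithLp.equiv 2 (n → ℂ)) v)
  rw [Complex.le_def] at h
  have heq : (inner ℂ v (Matrix.toEuclideanLin M v) : ℂ)
      = dotProduct (star ((WithLp.equiv 2 (n → ℂ)) v))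
          (M.mulVec ((WithLp.equiv 2 (n → ℂ)) v)) := by
    rw [EuclideanSpace.inner_eq_star_dotProduct, dotProduct_comm]
    rfl
  rw [heq]
  simpa using h.1

lemma QMat_psd (d t : ℕ) (b : Fin d) : (QMat d t b).PosSemidef := by
  refine Matrix.PosSemidef.of_dotProduct_mulVec_nonneg ?_ ?_
  · ext y x
    simp only [QMat, projMat, Matrix.conjTranspose_apply, Matrix.smul_apply, Matrix.sum_apply,
      Matrix.of_apply, smul_eq_mul, star_mul', star_inv₀, star_natCast, star_sum,
      apply_ite (star : ℂ → ℂ), star_one, star_zero]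
    congr 1
    refine Finset.sum_congr rfl fun i _ => ?_
    by_cases h : y = x
    · subst h; simp
    · have h' : ¬ x = y := fun hh => h hh.symm
      simp [h, h']
  · intro z
    have h1 : ∀ x : Fin t → Fin d,
        ∑ w, ((t:ℂ)⁻¹ * ∑ i, if x = w ∧ w i = b then 1 else 0) * z w
        = (t:ℂ)⁻¹ * ∑ i, (if x i = b then z x else 0) := by
      intro x
      rw [Finset.sum_eq_single x]
      · simp only [true_and, if_pos rfl, Finset.mul_sum, Finset.sum_mul]
        refine Finset.sum_congr rfl fun i _ => ?_
        by_cases h : x i = b <;> simp [h]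
      · intro w _ hw
        have : ¬ x = w := fun hh => hw hh.symm
        simp [this]
      · simp
    have key : dotProduct (star z) (QMat d t b *ᵥ z)
        = ((t:ℝ)⁻¹ : ℂ) * ∑ i : Fin t, ∑ y, (if y i = b then star (z y) * z y else 0) := by
      simp only [QMat, projMat, dotProduct, Matrix.mulVec, Matrix.smul_apply,
        Matrix.sum_apply, Matrix.of_apply, smul_eq_mul, Pi.star_apply]
      simp_rw [h1]
      push_cast
      have lhs : ∑ x : Fin t → Fin d, star (z x) * ((t:ℂ)⁻¹ * ∑ i, if x i = b then z x else 0)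
          = ∑ x : Fin t → Fin d, ∑ i : Fin t,
              (t:ℂ)⁻¹ * (if x i = b then star (z x) * z x else 0) := by
        refine Finset.sum_congr rfl fun x _ => ?_
        rw [Finset.mul_sum, Finset.mul_sum]
        refine Finset.sum_congr rfl fun i _ => ?_
        by_cases h : x i = b
        · simp [h]; ring
        · simp [h]
      rw [lhs, Finset.sum_comm]
      simp_rw [Finset.mul_sum]
    rw [key]
    refine mul_nonneg ?_ (Finset.sum_nonneg fun i _ => Finset.sum_nonneg fun y _ => ?_)
    · exact_mod_cast Complex.zero_le_real.2 (by positivity)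
    · by_cases h : y i = b
      · simpa [h] using star_mul_self_nonneg (z y)
      · simp [h]

lemma trace_tpow_Q (d t : ℕ) [NeZero t] (σ : Matrix (Fin d) (Fin d) ℂ) (hσ : σ.trace = 1)
    (b : Fin d) : (tpow d t σ * QMat d t b).trace = σ b b := by
  have hsum : ∀ i : Fin t,
      ∑ y : Fin t → Fin d, (if y i = b then ∏ j, σ (y j) (y j) else 0) = σ b b := by
    intro i
    have h1 : ∀ y : Fin t → Fin d, (if y i = b then ∏ j, σ (y j) (y j) else 0)
        = ∏ j, (fun (j : Fin t) (a : Fin d) =>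
            if j = i then (if a = b then σ a a else 0) else σ a a) j (y j) := by
      intro y
      by_cases h : y i = b
      · simp only [h, if_true]
        refine Finset.prod_congr rfl fun j _ => ?_
        by_cases hj : j = i <;> simp [hj, h]
      · simp only [h, if_false]
        symm
        apply Finset.prod_eq_zero (Finset.mem_univ i)
        simp [h]
    simp_rw [h1]
    rw [← Fintype.piFinset_univ, ← Finset.prod_univ_sum (fun _ : Fin t => (Finset.univ : Finset (Fin d))) (fun j a => if j = i then (if a = b then σ a a else 0) else σ a a)]
    rw [Finset.prod_eq_single i]
    · simp
    · intro j _ hj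
      simp only [if_neg hj]
      simpa [Matrix.trace, Matrix.diag] using hσ
    · simp
  have key : (tpow d t σ * QMat d t b).trace
      = ((t:ℂ))⁻¹ * ∑ i : Fin t, ∑ y : Fin t → Fin d,
          (if y i = b then ∏ j, σ (y j) (y j) else 0) := by
    rw [Matrix.trace]
    simp only [Matrix.diag_apply, Matrix.mul_apply, QMat, projMat, Matrix.smul_apply,
      Matrix.sum_apply, Matrix.of_apply, smul_eq_mul, tpow]
    have h2 : ∀ y : Fin t → Fin d,
        ∑ z, (∏ j, σ (y j) (z j)) * ((t:ℂ)⁻¹ * ∑ i, if z = y ∧ y i = b then 1 else 0)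
        = (t:ℂ)⁻¹ * ∑ i, (if y i = b then ∏ j, σ (y j) (y j) else 0) := by
      intro y
      rw [Finset.sum_eq_single y]
      · simp only [true_and, if_pos rfl]
        rw [Finset.mul_sum, Finset.mul_sum]
        ring_nf
        simp [Finset.mul_sum, mul_ite, mul_zero, mul_one, mul_comm, mul_assoc, mul_left_comm]
      · intro z _ hz
        simp [if_neg, hz, Ne.symm hz]
      · simp
    simp_rw [h2]
    rw [← Finset.mul_sum, Finset.sum_comm]
  rw [key]
  simp_rw [hsum]
  rw [Finset.sum_const, Finset.card_univ, Fintype.card_fin, nsmul_eq_mul]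
  rw [← mul_assoc, inv_mul_cancel₀ (by exact_mod_cast (NeZero.ne t)), one_mul]

/-- Variance reduction bound (abstract form). With `N = 𝓜⁻¹(O)` Hermitian, `{ψ_x}` an
orthonormal basis of simultaneous eigenvectors of `S_t` (eigenvalues `f x`, `|f x| ≤ 1`)
and of all `Q_b` (eigenvalues `q b x`), `Pr(x|V) = ⟨ψ_x|(VρV†)^{⊗t}|ψ_x⟩` and
`Pr(b|x) = q b x`, the second moment of the replica estimator
`ô_t = Re(f x)·⟨b|V 𝓜⁻¹(O) V†|b⟩` is at most that of the linear single-copy shadow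
estimator: `E[ô_t²] ≤ E_V Σ_b ⟨b|V𝓜⁻¹(O)V†|b⟩² ⟨b|VρV†|b⟩`. -/
theorem replica_second_moment_le (d t : ℕ) [NeZero d] [NeZero t]
    {V X : Type*} [Fintype V] [Fintype X]
    (p : V → ℝ) (hp0 : ∀ v, 0 ≤ p v) (hp1 : ∑ v, p v = 1)
    (U : V → Matrix (Fin d) (Fin d) ℂ) (hU : ∀ v, U v ∈ Matrix.unitaryGroup (Fin d) ℂ)
    (ρ : Matrix (Fin d) (Fin d) ℂ) (hρ : ρ.PosSemidef) (hρ1 : ρ.trace = 1)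
    (N : Matrix (Fin d) (Fin d) ℂ) (hN : N.IsHermitian)
    (ψ : OrthonormalBasis X ℂ (EuclideanSpace ℂ (Fin t → Fin d)))
    (f : X → ℂ) (hf : ∀ x, ‖f x‖ ≤ 1)
    (hfeig : ∀ x, Matrix.toEuclideanLin (shiftMat d t) (ψ x) = f x • ψ x)
    (q : Fin d → X → ℝ)
    (hqeig : ∀ (b : Fin d) (x : X),
      Matrix.toEuclideanLin (QMat d t b) (ψ x) = (q b x : ℂ) • ψ x) :
    ∑ v, p v * ∑ x,
        (inner ℂ (ψ x) (Matrix.toEuclideanLin (tpow d t (U v * ρ * (U v)ᴴ)) (ψ x)) : ℂ).re *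
          ∑ b, q b x * ((f x).re * ((U v * N * (U v)ᴴ) b b).re) ^ 2
      ≤ ∑ v, p v * ∑ b,
          ((U v * N * (U v)ᴴ) b b).re ^ 2 * ((U v * ρ * (U v)ᴴ) b b).re := by
  classical
  -- nonnegativity of the eigenvalues q
  have hq0 : ∀ (b : Fin d) (x : X), 0 ≤ q b x := by
    intro b x
    have hself : (inner ℂ (ψ x) (ψ x) : ℂ) = 1 := by
      simpa using orthonormal_iff_ite.mp ψ.orthonormal x x
    have h1 : ((q b x : ℝ) : ℂ) = inner ℂ (ψ x) (Matrix.toEuclideanLin (QMat d t b) (ψ x)) := by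
      rw [hqeig, inner_smul_right, hself, mul_one]
    have h2 := psd_inner_nonneg (QMat_psd d t b) (ψ x)
    rw [← h1] at h2
    simpa using h2
  have hf2 : ∀ x, ((f x).re)^2 ≤ 1 := by
    intro x
    have h1 : |(f x).re| ≤ 1 := le_trans (Complex.abs_re_le_norm _) (hf x)
    calc (f x).re ^ 2 = |(f x).re| ^ 2 := (sq_abs _).symm
      _ ≤ 1 ^ 2 := by
          exact pow_le_pow_left₀ (abs_nonneg _) h1 2
      _ = 1 := one_pow 2
  refine Finset.sum_le_sum fun v _ => ?_
  refine mul_le_mul_of_nonneg_left ?_ (hp0 v)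
  set σ := U v * ρ * (U v)ᴴ with hσdef
  set c : Fin d → ℝ := fun b => ((U v * N * (U v)ᴴ) b b).re with hcdef
  set P : X → ℝ := fun x =>
    (inner ℂ (ψ x) (Matrix.toEuclideanLin (tpow d t σ) (ψ x)) : ℂ).re with hPdef
  have hσpsd : σ.PosSemidef := hρ.mul_mul_conjTranspose_same (U v)
  have hσtr : σ.trace = 1 := by
    rw [hσdef, Matrix.trace_mul_cycle]
    have hU1 : (U v)ᴴ * U v = 1 := by
      have := (Unitary.mem_iff.mp (hU v)).1
      simpa [Matrix.star_eq_conjTranspose] using this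
    rw [hU1, one_mul, hρ1]
  have hP0 : ∀ x, 0 ≤ P x := fun x => psd_inner_nonneg (tpow_psd d t hσpsd) (ψ x)
  -- the key trace identity
  have key : ∀ b : Fin d, ∑ x, P x * q b x = (σ b b).re := by
    intro b
    have hc : ∀ x, ((q b x : ℝ) : ℂ)
          * (inner ℂ (ψ x) (Matrix.toEuclideanLin (tpow d t σ) (ψ x)) : ℂ)
        = (inner ℂ (ψ x) (Matrix.toEuclideanLin (tpow d t σ * QMat d t b) (ψ x)) : ℂ) := by
      intro x
      have hmul : Matrix.toEuclideanLin (tpow d t σ * QMat d t b) (ψ x)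
          = Matrix.toEuclideanLin (tpow d t σ) (Matrix.toEuclideanLin (QMat d t b) (ψ x)) := by
        simp [Matrix.toEuclideanLin_apply]
      rw [hmul, hqeig, map_smul, inner_smul_right]
    calc ∑ x, P x * q b x
        = (∑ x, ((q b x : ℝ) : ℂ)
            * (inner ℂ (ψ x) (Matrix.toEuclideanLin (tpow d t σ) (ψ x)) : ℂ)).re := by
          rw [Complex.re_sum]
          refine Finset.sum_congr rfl fun x _ => ?_
          rw [Complex.re_ofReal_mul, hPdef]
          ring
      _ = ((tpow d t σ * QMat d t b).trace).re := by
          rw [Finset.sum_congr rfl fun x _ => hc x, onb_trace]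
      _ = (σ b b).re := by rw [trace_tpow_Q d t σ hσtr b]
  -- rearrange and bound
  have step1 : ∑ x, P x * ∑ b, q b x * ((f x).re * c b) ^ 2
      = ∑ b, ∑ x, P x * (q b x * ((f x).re * c b) ^ 2) := by
    simp_rw [Finset.mul_sum]
    exact Finset.sum_comm
  have step2 : ∑ b, c b ^ 2 * (σ b b).re
      = ∑ b, ∑ x, (P x * q b x) * (c b) ^ 2 := by
    refine Finset.sum_congr rfl fun b _ => ?_
    rw [← key b, Finset.mul_sum]
    exact Finset.sum_congr rfl fun x _ => mul_comm _ _
  rw [step1, step2]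
  refine Finset.sum_le_sum fun b _ => Finset.sum_le_sum fun x _ => ?_
  have hrw : P x * (q b x * ((f x).re * c b) ^ 2)
      = ((P x * q b x) * ((f x).re) ^ 2) * (c b) ^ 2 := by ring
  rw [hrw]
  refine mul_le_mul_of_nonneg_right ?_ (sq_nonneg _)
  calc (P x * q b x) * ((f x).re) ^ 2 ≤ (P x * q b x) * 1 :=
        mul_le_mul_of_nonneg_left (hf2 x) (mul_nonneg (hP0 x) (hq0 b x))
    _ = P x * q b x := mul_one _
end
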